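/- arXiv:2407.05511 — 5 statements merged into one kernel-verified Lean document; each statement's English description precedes it below -/
import Mathlib

section
/- Let V : ι → ℝ and Vol : ι → ℝ be functions on a finite index set ι with Vol(n) > 0 and V(n) bounded above, let λ > 0, and suppose α is a real number with α > max_n V(n) and ∑_n λ·Vol(n)/(α - V(n)) = 1. Then α ≥ max_n (V(n) + λ·Vol(n)) and α ≤ max_n V(n) + λ·∑_n Vol(n). In particular if ∑_n Vol(n) = 1 then max_n(V(n) + λ Vol(n)) ≤ α ≤ max_n V(n) + λ. -/
/-- bounds on the normalizing constant `α` of the distribution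
`d(n) = λ·Vol(n)/(α - V(n))`:
`max_n (V(n) + λ·Vol(n)) ≤ α ≤ max_n V(n) + λ·∑_n Vol(n)`;
in particular, if `∑ Vol = 1` then `max_n(V(n)+λVol(n)) ≤ α ≤ max_n V(n) + λ`. -/
theorem stmt5 {ι : Type*} [Fintype ι] [Nonempty ι]
    (V Vol : ι → ℝ) (hVol : ∀ n, 0 < Vol n)
    (lam : ℝ) (hlam : 0 < lam)
    (α : ℝ) (hα : Finset.univ.sup' Finset.univ_nonempty V < α)
    (hsum : ∑ n, lam * Vol n / (α - V n) = 1) :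
    Finset.univ.sup' Finset.univ_nonempty (fun n => V n + lam * Vol n) ≤ α ∧
    α ≤ Finset.univ.sup' Finset.univ_nonempty V + lam * ∑ n, Vol n ∧
    (∑ n, Vol n = 1 →
      Finset.univ.sup' Finset.univ_nonempty (fun n => V n + lam * Vol n) ≤ α ∧
      α ≤ Finset.univ.sup' Finset.univ_nonempty V + lam) := by
  set M := Finset.univ.sup' Finset.univ_nonempty V with hM
  have hVle : ∀ n, V n ≤ M := fun n => Finset.le_sup' V (Finset.mem_univ n)
  have hpos : ∀ n, 0 < α - V n := fun n => by
    have := hVle n; linarith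
  have hnonneg : ∀ n ∈ Finset.univ, 0 ≤ lam * Vol n / (α - V n) := fun n _ =>
    le_of_lt (div_pos (mul_pos hlam (hVol n)) (hpos n))
  -- each term ≤ 1
  have hterm : ∀ n, lam * Vol n / (α - V n) ≤ 1 := by
    intro n
    calc lam * Vol n / (α - V n)
        ≤ ∑ m, lam * Vol m / (α - V m) :=
          Finset.single_le_sum hnonneg (Finset.mem_univ n)
      _ = 1 := hsum
  have h1 : Finset.univ.sup' Finset.univ_nonempty (fun n => V n + lam * Vol n) ≤ α := by
    apply Finset.sup'_le
    intro n _
    have h := hterm n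
    have hp := hpos n
    rw [div_le_one hp] at h
    linarith
  have hMpos : 0 < α - M := by linarith
  have h2 : α ≤ M + lam * ∑ n, Vol n := by
    have hge : ∀ n ∈ Finset.univ, lam * Vol n / (α - V n) ≤ lam * Vol n / (α - M) := by
      intro n _
      apply div_le_div_of_nonneg_left (le_of_lt (mul_pos hlam (hVol n))) hMpos
      linarith [hVle n]
    have h1le : (1:ℝ) ≤ ∑ n, lam * Vol n / (α - M) := by
      rw [← hsum]; exact Finset.sum_le_sum hge
    rw [← Finset.sum_div, le_div_iff₀ hMpos, one_mul] at h1le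
    rw [Finset.mul_sum]
    linarith
  refine ⟨h1, h2, fun hv => ⟨h1, ?_⟩⟩
  rw [hv, mul_one] at h2
  exact h2
end

section
/- Under the assumptions of the previous statement and additionally 0 ≤ V(n) ≤ 1/(1-γ) for all n with γ ∈ [0,1), ∑_n Vol(n) = 1, and λ = c/√N for constants c > 0, N ≥ 1: each probability d(n) = λ·Vol(n)/(α - V(n)) satisfies d(n) ≥ Vol(n) · c(1-γ)/(√N + c(1-γ)). -/
/-- with `0 ≤ V(n) ≤ 1/(1-γ)`, `∑ Vol = 1`, and `λ = c/√N`, each probability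
`d(n) = λ·Vol(n)/(α - V(n))` satisfies `d(n) ≥ Vol(n)·c(1-γ)/(√N + c(1-γ))`. -/
theorem stmt6 {ι : Type*} [Fintype ι] [Nonempty ι]
    (V Vol : ι → ℝ) (hVol : ∀ n, 0 < Vol n) (hVolsum : ∑ n, Vol n = 1)
    (γ : ℝ) (hγ0 : 0 ≤ γ) (hγ1 : γ < 1)
    (hV0 : ∀ n, 0 ≤ V n) (hV1 : ∀ n, V n ≤ 1 / (1 - γ))
    (c N : ℝ) (hc : 0 < c) (hN : 1 ≤ N)
    (lam : ℝ) (hlam : lam = c / Real.sqrt N)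
    (α : ℝ) (hα : Finset.univ.sup' Finset.univ_nonempty V < α)
    (hsum : ∑ n, lam * Vol n / (α - V n) = 1) :
    ∀ n, Vol n * (c * (1 - γ) / (Real.sqrt N + c * (1 - γ)))
      ≤ lam * Vol n / (α - V n) := by
  have hs0 : 0 < Real.sqrt N := Real.sqrt_pos.2 (by linarith)
  have hγ : 0 < 1 - γ := by linarith
  have hlam0 : 0 < lam := by rw [hlam]; positivity
  set M := Finset.univ.sup' Finset.univ_nonempty V with hM
  have hVM : ∀ m, V m ≤ M := fun m => Finset.le_sup' V (Finset.mem_univ m)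
  have hαV : ∀ m, 0 < α - V m := fun m => sub_pos.2 ((hVM m).trans_lt hα)
  have hαM : 0 < α - M := sub_pos.2 hα
  have hsum' : (1:ℝ) ≤ lam / (α - M) := by
    calc (1:ℝ) = ∑ m, lam * Vol m / (α - V m) := hsum.symm
    _ ≤ ∑ m, lam * Vol m / (α - M) := by
        apply Finset.sum_le_sum
        intro m _
        gcongr
        · exact mul_nonneg hlam0.le (hVol m).le
        · exact hVM m
    _ = lam / (α - M) := by
        rw [← Finset.sum_div, ← Finset.mul_sum, hVolsum, mul_one]
  have hMle : α - M ≤ lam := by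
    have := (one_le_div hαM).1 hsum'
    linarith
  have hMub : M ≤ 1 / (1 - γ) := Finset.sup'_le _ _ fun m _ => hV1 m
  have hαub : α ≤ 1 / (1 - γ) + lam := by linarith
  have heq : c * (1 - γ) / (Real.sqrt N + c * (1 - γ))
      = lam / (1 / (1 - γ) + lam) := by
    rw [hlam]
    field_simp
  intro n
  rw [heq]
  have h1 : lam * Vol n / (α - V n) = Vol n * (lam / (α - V n)) := by ring
  rw [h1]
  gcongr
  · exact (hVol n).le
  · exact hαV n
  · linarith [hV0 n, hVM n]
end

section
/- In the finite rooted tree setting, the map π ↦ d^π is injective on policies with everywhere-positive stopping probabilities: if two tree policies π₁, π₂ (each assigning positive probability to 'stay' at every node) induce the same stopping distribution d^{π₁} = d^{π₂} with d positive on all nodes, then π₁(a | n) = π₂(a | n) for every node n and move a. Moreover, π(a | n) = (∑_{n' ∈ subtree(child(n,a))} d^π(n')) / (∑_{n' ∈ subtree(n)} d^π(n')). -/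
/-- A finite rooted tree shape: each node has `k` child actions. -/
inductive STree : Type where
  | node (k : ℕ) (child : Fin k → STree) : STree

namespace STree

/-- Probability that the random walk, started at the node addressed by `pre`
(with subtree shape given), stops exactly at the node addressed by `pre ++ p`. -/
def walkStop (stay : List ℕ → ℝ) (edge : List ℕ → ℕ → ℝ) : STree → List ℕ → List ℕ → ℝ
  | .node _ _, pre, [] => stay pre
  | .node k child, pre, i :: p =>
      if h : i < k then edge pre i * walkStop stay edge (child ⟨i, h⟩) (pre ++ [i]) p else 0

/-- Product of the edge probabilities `π(a | parent(a))` along the path `p` starting at `pre`. -/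
def edgeProd (edge : List ℕ → ℕ → ℝ) : List ℕ → List ℕ → ℝ
  | _, [] => 1
  | pre, i :: p => edge pre i * edgeProd edge (pre ++ [i]) p

/-- The path `p` addresses an actual node of the tree. -/
def validPath : STree → List ℕ → Prop
  | _, [] => True
  | .node k child, i :: p => ∃ h : i < k, validPath (child ⟨i, h⟩) p

/-- Sum of `f` over all (addresses of) nodes of the subtree whose root is addressed by `pre`
and whose shape is the given tree. -/
def sumOver (f : List ℕ → ℝ) : STree → List ℕ → ℝ
  | .node k child, pre => f pre + ∑ j : Fin k, sumOver f (child j) (pre ++ [j.1])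

/-- The subtree addressed by a path, if the path is valid. -/
def sub? : STree → List ℕ → Option STree
  | t, [] => some t
  | .node k child, i :: p => if h : i < k then sub? (child ⟨i, h⟩) p else none

/-- `(stay, edge)` is a genuine tree policy: at every node of the tree, the stay
probability together with the child-action probabilities form a probability
distribution over the moves. -/
def validPolicy (stay : List ℕ → ℝ) (edge : List ℕ → ℕ → ℝ) : STree → List ℕ → Prop
  | .node k child, pre =>
      0 ≤ stay pre ∧ (∀ i, i < k → 0 ≤ edge pre i) ∧
      (stay pre + ∑ j : Fin k, edge pre j.1 = 1) ∧
      ∀ j : Fin k, validPolicy stay edge (child j) (pre ++ [j.1])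

end STree

namespace Aux10
open STree

def massRel (stay : List ℕ → ℝ) (edge : List ℕ → ℕ → ℝ) : STree → List ℕ → ℝ
  | .node k child, pre =>
      stay pre + ∑ j : Fin k, edge pre j.1 * massRel stay edge (child j) (pre ++ [j.1])

lemma massRel_eq_one (stay : List ℕ → ℝ) (edge : List ℕ → ℕ → ℝ) :
    ∀ (s : STree) (pre : List ℕ), validPolicy stay edge s pre → massRel stay edge s pre = 1
  | .node k child, pre, ⟨_, _, hsum, hrec⟩ => by
      simp only [massRel]
      rw [Finset.sum_congr rfl fun j _ => by
        rw [massRel_eq_one stay edge (child j) _ (hrec j), mul_one]]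
      exact hsum

lemma edgeProd_append (edge : List ℕ → ℕ → ℝ) :
    ∀ (p pre q : List ℕ),
      edgeProd edge pre (p ++ q) = edgeProd edge pre p * edgeProd edge (pre ++ p) q
  | [], pre, q => by simp [edgeProd]
  | i :: p, pre, q => by
      have h1 : edgeProd edge pre ((i :: p) ++ q)
          = edge pre i * edgeProd edge (pre ++ [i]) (p ++ q) := rfl
      rw [h1, edgeProd_append edge p (pre ++ [i]) q]
      simp [edgeProd, mul_assoc, List.append_assoc]

lemma walkStop_split (stay : List ℕ → ℝ) (edge : List ℕ → ℕ → ℝ) :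
    ∀ (pre : List ℕ) (t : STree) (pre0 p : List ℕ) (s : STree), sub? t pre = some s →
      walkStop stay edge t pre0 (pre ++ p)
        = edgeProd edge pre0 pre * walkStop stay edge s (pre0 ++ pre) p
  | [], t, pre0, p, s, hs => by
      simp only [sub?] at hs; cases hs; simp [edgeProd]
  | i :: pre, .node k child, pre0, p, s, hs => by
      simp only [sub?] at hs
      split at hs
      · rename_i h
        simp only [List.cons_append, walkStop, dif_pos h, edgeProd, List.append_eq, List.nil_append,
          walkStop_split stay edge pre (child ⟨i, h⟩) (pre0 ++ [i]) p s hs, mul_assoc,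
          List.append_assoc, List.singleton_append]
      · exact absurd hs (by simp)

lemma sub?_append :
    ∀ (pre : List ℕ) (t s : STree), sub? t pre = some s →
      ∀ (q : List ℕ) (s' : STree), sub? s q = some s' → sub? t (pre ++ q) = some s'
  | [], t, s, hs, q, s', hq => by simp only [sub?] at hs; cases hs; simpa using hq
  | i :: pre, .node k child, s, hs, q, s', hq => by
      simp only [sub?] at hs
      split at hs
      · rename_i h
        simpa [sub?, h] using sub?_append pre _ s hs q s' hq
      · exact absurd hs (by simp)

lemma sub?_child {k : ℕ} {child : Fin k → STree} {t : STree} {pre : List ℕ}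
    (hs : sub? t pre = some (.node k child)) (j : Fin k) :
    sub? t (pre ++ [j.1]) = some (child j) := by
  refine sub?_append pre t _ hs [j.1] (child j) ?_
  simp [sub?, j.isLt]

lemma validPolicy_sub (stay : List ℕ → ℝ) (edge : List ℕ → ℕ → ℝ) :
    ∀ (p : List ℕ) (t : STree) (pre0 : List ℕ) (s : STree),
      validPolicy stay edge t pre0 → sub? t p = some s →
      validPolicy stay edge s (pre0 ++ p)
  | [], t, pre0, s, hpol, hs => by simp only [sub?] at hs; cases hs; simpa using hpol
  | i :: p, .node k child, pre0, s, hpol, hs => by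
      simp only [sub?] at hs
      split at hs
      · rename_i h
        have := validPolicy_sub stay edge p (child ⟨i, h⟩) (pre0 ++ [i]) s
          (hpol.2.2.2 ⟨i, h⟩) hs
        simpa [List.append_assoc] using this
      · exact absurd hs (by simp)

lemma validPath_of_sub :
    ∀ (pre : List ℕ) (t s : STree), sub? t pre = some s →
      ∀ (q : List ℕ), validPath s q → validPath t (pre ++ q)
  | [], t, s, hs, q, hq => by simp only [sub?] at hs; cases hs; simpa using hq
  | i :: pre, .node k child, s, hs, q, hq => by
      simp only [sub?] at hs
      split at hs
      · rename_i h
        exact ⟨h, validPath_of_sub pre _ s hs q hq⟩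
      · exact absurd hs (by simp)

lemma sub?_of_validPath :
    ∀ (p : List ℕ) (t : STree), validPath t p → ∃ s, sub? t p = some s
  | [], t, _ => ⟨t, by cases t <;> rfl⟩
  | i :: p, .node k child, ⟨h, hp⟩ => by
      obtain ⟨s, hs⟩ := sub?_of_validPath p (child ⟨i, h⟩) hp
      exact ⟨s, by simp [sub?, h, hs]⟩

lemma validPath_prefix :
    ∀ (p : List ℕ) (t : STree) (q : List ℕ), validPath t (p ++ q) → validPath t p
  | [], t, q, _ => by cases t <;> trivial
  | i :: p, .node k child, q, ⟨h, hp⟩ => ⟨h, validPath_prefix p _ q hp⟩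

lemma sumOver_congr (f g : List ℕ → ℝ) :
    ∀ (s : STree) (pre : List ℕ),
      (∀ q, validPath s q → f (pre ++ q) = g (pre ++ q)) →
      sumOver f s pre = sumOver g s pre
  | .node k child, pre, h => by
      simp only [sumOver]
      rw [show f pre = g pre by simpa using h [] trivial]
      congr 1
      refine Finset.sum_congr rfl fun j _ => ?_
      refine sumOver_congr f g (child j) (pre ++ [j.1]) fun q hq => ?_
      have := h (j.1 :: q) ⟨j.isLt, by simpa using hq⟩
      simpa [List.append_assoc] using this

lemma sumOver_d (t : STree) (stay : List ℕ → ℝ) (edge : List ℕ → ℕ → ℝ) :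
    ∀ (s : STree) (pre : List ℕ), sub? t pre = some s →
      sumOver (fun q => walkStop stay edge t [] q) s pre
        = edgeProd edge [] pre * massRel stay edge s pre
  | .node k child, pre, hs => by
      simp only [sumOver, massRel, mul_add, Finset.mul_sum]
      congr 1
      · have := walkStop_split stay edge pre t [] [] _ hs
        simpa [walkStop] using this
      · refine Finset.sum_congr rfl fun j _ => ?_
        rw [sumOver_d t stay edge (child j) (pre ++ [j.1]) (sub?_child hs j)]
        rw [edgeProd_append edge pre [] [j.1]]
        simp [edgeProd, mul_assoc]

end Aux10

/-- a tree policy with everywhere-positive stay probabilities is uniquely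
determined by its stopping distribution, and the policy can be recovered from subtree sums:
`π(a | n) = (∑_{n' ∈ subtree(child(n,a))} d^π(n')) / (∑_{n' ∈ subtree(n)} d^π(n'))`. -/
theorem stmt10 (t : STree)
    (stay₁ edge₁ stay₂ edge₂ : _)
    (hpol₁ : STree.validPolicy stay₁ edge₁ t []) (hpol₂ : STree.validPolicy stay₂ edge₂ t [])
    (hstay₁ : ∀ p, STree.validPath t p → 0 < stay₁ p)
    (hstay₂ : ∀ p, STree.validPath t p → 0 < stay₂ p)
    (hdpos : ∀ p, STree.validPath t p → 0 < STree.walkStop stay₁ edge₁ t [] p)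
    (heq : ∀ p, STree.validPath t p →
      STree.walkStop stay₁ edge₁ t [] p = STree.walkStop stay₂ edge₂ t [] p) :
    (∀ p, STree.validPath t p → stay₁ p = stay₂ p) ∧
    (∀ p i, STree.validPath t (p ++ [i]) → edge₁ p i = edge₂ p i) ∧
    (∀ p i, STree.validPath t (p ++ [i]) →
      ∀ s' s'', STree.sub? t p = some s' → STree.sub? t (p ++ [i]) = some s'' →
        edge₁ p i
          = STree.sumOver (fun q => STree.walkStop stay₁ edge₁ t [] q) s'' (p ++ [i])
            / STree.sumOver (fun q => STree.walkStop stay₁ edge₁ t [] q) s' p) := by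
  have sumd : ∀ (stay : List ℕ → ℝ) (edge : List ℕ → ℕ → ℝ),
      STree.validPolicy stay edge t [] → ∀ p s, STree.sub? t p = some s →
      STree.sumOver (fun q => STree.walkStop stay edge t [] q) s p
        = STree.edgeProd edge [] p := by
    intro stay edge hpol p s hs
    rw [Aux10.sumOver_d t stay edge s p hs,
      Aux10.massRel_eq_one stay edge s p
        (by simpa using Aux10.validPolicy_sub stay edge p t [] s hpol hs), mul_one]
  have dsplit : ∀ (stay : List ℕ → ℝ) (edge : List ℕ → ℕ → ℝ) p s,
      STree.sub? t p = some s →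
      STree.walkStop stay edge t [] p = STree.edgeProd edge [] p * stay p := by
    intro stay edge p s hs
    have h := Aux10.walkStop_split stay edge p t [] [] s hs
    cases s with
    | node k child => simpa [STree.walkStop] using h
  have epos₁ : ∀ p, STree.validPath t p → 0 < STree.edgeProd edge₁ [] p := by
    intro p hp
    obtain ⟨s, hs⟩ := Aux10.sub?_of_validPath p t hp
    have hd := hdpos p hp
    rw [dsplit stay₁ edge₁ p s hs] at hd
    have hs1 := hstay₁ p hp
    nlinarith
  have eeq : ∀ p s, STree.sub? t p = some s →
      STree.edgeProd edge₁ [] p = STree.edgeProd edge₂ [] p := by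
    intro p s hs
    rw [← sumd stay₁ edge₁ hpol₁ p s hs, ← sumd stay₂ edge₂ hpol₂ p s hs]
    exact Aux10.sumOver_congr _ _ s p fun q hq =>
      heq (p ++ q) (Aux10.validPath_of_sub p t s hs q hq)
  refine ⟨?_, ?_, ?_⟩
  · intro p hp
    obtain ⟨s, hs⟩ := Aux10.sub?_of_validPath p t hp
    have h1 := heq p hp
    rw [dsplit stay₁ edge₁ p s hs, dsplit stay₂ edge₂ p s hs, ← eeq p s hs] at h1
    exact mul_left_cancel₀ (ne_of_gt (epos₁ p hp)) h1
  · intro p i hpi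
    have hp := Aux10.validPath_prefix p t [i] hpi
    obtain ⟨s0, hs0⟩ := Aux10.sub?_of_validPath p t hp
    obtain ⟨s, hs⟩ := Aux10.sub?_of_validPath (p ++ [i]) t hpi
    have e1 : STree.edgeProd edge₁ [] (p ++ [i])
        = STree.edgeProd edge₁ [] p * edge₁ p i := by
      rw [Aux10.edgeProd_append edge₁ p [] [i]]; simp [STree.edgeProd]
    have e2 : STree.edgeProd edge₂ [] (p ++ [i])
        = STree.edgeProd edge₂ [] p * edge₂ p i := by
      rw [Aux10.edgeProd_append edge₂ p [] [i]]; simp [STree.edgeProd]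
    have h1 := eeq (p ++ [i]) s hs
    rw [e1, e2, ← eeq p s0 hs0] at h1
    exact mul_left_cancel₀ (ne_of_gt (epos₁ p hp)) h1
  · intro p i hpi s' s'' hs' hs''
    have hp := Aux10.validPath_prefix p t [i] hpi
    have hpos := epos₁ p hp
    rw [sumd stay₁ edge₁ hpol₁ (p ++ [i]) s'' hs'', sumd stay₁ edge₁ hpol₁ p s' hs',
      Aux10.edgeProd_append edge₁ p [] [i]]
    simp only [List.nil_append, STree.edgeProd, mul_one]
    field_simp
end

section
/- Fix a finite set ι, values 𝒱 : ι → ℝ, volumes Vol : ι → ℝ_{>0} with ∑ Vol = 1, and λ > 0. Consider maximizing L(d) = ∑_n 𝒱(n) d(n) + λ ∑_n Vol(n) ln(d(n)/Vol(n)) over probability distributions d on ι with d(n) > 0. Then L is strictly concave on the simplex interior and its unique maximizer d* satisfies d*(n) = λ Vol(n)/(α − 𝒱(n)) where α is the unique constant exceeding max_n 𝒱(n) such that ∑_n λ Vol(n)/(α − 𝒱(n)) = 1. -/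
private lemma key_le (c s t : ℝ) (hc : 0 < c) (hs : 0 < s) (ht : 0 < t) :
    c * Real.log t - c / s * t ≤ c * Real.log s - c / s * s := by
  have hx : 0 < t / s := div_pos ht hs
  have h := Real.log_le_sub_one_of_pos hx
  rw [Real.log_div ht.ne' hs.ne'] at h
  have e1 : c / s * s = c := div_mul_cancel₀ c hs.ne'
  have e2 : c / s * t = c * (t / s) := by ring
  have h2 := mul_le_mul_of_nonneg_left h hc.le
  rw [mul_sub, mul_sub] at h2
  linarith

private lemma key_lt (c s t : ℝ) (hc : 0 < c) (hs : 0 < s) (ht : 0 < t) (hne : t ≠ s) :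
    c * Real.log t - c / s * t < c * Real.log s - c / s * s := by
  have hx : 0 < t / s := div_pos ht hs
  have hx1 : t / s ≠ 1 := by
    simp only [ne_eq, div_eq_one_iff_eq hs.ne']; exact hne
  have h := Real.log_lt_sub_one_of_pos hx hx1
  rw [Real.log_div ht.ne' hs.ne'] at h
  have e1 : c / s * s = c := div_mul_cancel₀ c hs.ne'
  have e2 : c / s * t = c * (t / s) := by ring
  have h2 := mul_lt_mul_of_pos_left h hc
  rw [mul_sub, mul_sub] at h2
  linarith

/-- the state-occupancy–regularized objective
`L(d) = ∑ 𝒱(n) d(n) + λ ∑ Vol(n) ln(d(n)/Vol(n))` is strictly concave on the interior of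
the simplex, and its unique maximizer there is `d*(n) = λ Vol(n)/(α - 𝒱(n))`, where `α` is
the constant exceeding `max 𝒱` normalizing `d*`. -/
theorem stmt13 {ι : Type*} [Fintype ι] [Nonempty ι]
    (V Vol : ι → ℝ) (hVol : ∀ n, 0 < Vol n) (hVolsum : ∑ n, Vol n = 1)
    (lam : ℝ) (hlam : 0 < lam)
    (L : (ι → ℝ) → ℝ)
    (hL : ∀ d, L d = ∑ n, V n * d n + lam * ∑ n, Vol n * Real.log (d n / Vol n))
    (α : ℝ) (hα : Finset.univ.sup' Finset.univ_nonempty V < α)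
    (hsum : ∑ n, lam * Vol n / (α - V n) = 1) :
    StrictConcaveOn ℝ {d : ι → ℝ | (∀ n, 0 < d n) ∧ ∑ n, d n = 1} L ∧
    (∀ n, 0 < lam * Vol n / (α - V n)) ∧
    (∀ d : ι → ℝ, (∀ n, 0 < d n) → ∑ n, d n = 1 →
      d ≠ (fun n => lam * Vol n / (α - V n)) →
      L d < L (fun n => lam * Vol n / (α - V n))) := by
  have hαV : ∀ n, V n < α := fun n =>
    lt_of_le_of_lt (Finset.le_sup' V (Finset.mem_univ n)) hα
  have hds : ∀ n, 0 < lam * Vol n / (α - V n) := fun n =>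
    div_pos (mul_pos hlam (hVol n)) (sub_pos.2 (hαV n))
  -- rewrite L in a convenient form
  have hLd : ∀ d : ι → ℝ, (∀ n, 0 < d n) →
      L d = ∑ n, V n * d n + lam * ∑ n, Vol n * Real.log (d n)
        - lam * ∑ n, Vol n * Real.log (Vol n) := by
    intro d hd
    rw [hL]
    have hlog : ∀ n, Real.log (d n / Vol n) = Real.log (d n) - Real.log (Vol n) :=
      fun n => Real.log_div (hd n).ne' (hVol n).ne'
    simp only [hlog, mul_sub]
    rw [Finset.sum_sub_distrib, mul_sub]
    ring
  refine ⟨⟨?_, ?_⟩, hds, ?_⟩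
  · -- convexity of the constraint set
    intro x hx y hy a b ha hb hab
    obtain ⟨hx1, hx2⟩ := hx
    obtain ⟨hy1, hy2⟩ := hy
    constructor
    · intro n
      simp only [Pi.add_apply, Pi.smul_apply, smul_eq_mul]
      rcases ha.lt_or_eq with h | h
      · have h1 : 0 < a * x n := mul_pos h (hx1 n)
        have h2 : 0 ≤ b * y n := mul_nonneg hb (hy1 n).le
        linarith
      · have hb1 : b = 1 := by linarith
        rw [← h, hb1]
        simpa using hy1 n
    · simp only [Pi.add_apply, Pi.smul_apply, smul_eq_mul]
      rw [Finset.sum_add_distrib, ← Finset.mul_sum, ← Finset.mul_sum, hx2, hy2]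
      simpa using hab
  · -- strict concavity inequality
    intro x hx y hy hxy a b ha hb hab
    obtain ⟨hx1, hx2⟩ := hx
    obtain ⟨hy1, hy2⟩ := hy
    have hmixpos : ∀ n, 0 < a * x n + b * y n := fun n =>
      add_pos (mul_pos ha (hx1 n)) (mul_pos hb (hy1 n))
    have hmixeval : ∀ n, (a • x + b • y) n = a * x n + b * y n := fun n => by
      simp [smul_eq_mul]
    -- key strict inequality on the log part
    have hkey : a * (∑ n, Vol n * Real.log (x n)) + b * (∑ n, Vol n * Real.log (y n))
        < ∑ n, Vol n * Real.log (a * x n + b * y n) := by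
      obtain ⟨n0, hn0⟩ := Function.ne_iff.mp hxy
      rw [Finset.mul_sum, Finset.mul_sum, ← Finset.sum_add_distrib]
      apply Finset.sum_lt_sum
      · intro n _
        have h := (strictConcaveOn_log_Ioi.concaveOn).2 (Set.mem_Ioi.2 (hx1 n))
          (Set.mem_Ioi.2 (hy1 n)) ha.le hb.le hab
        simp only [smul_eq_mul] at h
        nlinarith [(hVol n).le, mul_le_mul_of_nonneg_left h (hVol n).le]
      · refine ⟨n0, Finset.mem_univ n0, ?_⟩
        have h := strictConcaveOn_log_Ioi.2 (Set.mem_Ioi.2 (hx1 n0))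
          (Set.mem_Ioi.2 (hy1 n0)) hn0 ha hb hab
        simp only [smul_eq_mul] at h
        nlinarith [hVol n0, mul_lt_mul_of_pos_left h (hVol n0)]
    have hlin : ∑ n, V n * (a * x n + b * y n)
        = a * ∑ n, V n * x n + b * ∑ n, V n * y n := by
      rw [Finset.mul_sum, Finset.mul_sum, ← Finset.sum_add_distrib]
      exact Finset.sum_congr rfl (fun n _ => by ring)
    have hLx := hLd x hx1
    have hLy := hLd y hy1
    have hLm := hLd (a • x + b • y) (fun n => (hmixeval n) ▸ hmixpos n)
    simp only [hmixeval] at hLm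
    set C := ∑ n, Vol n * Real.log (Vol n) with hC
    have h1 := mul_lt_mul_of_pos_left hkey hlam
    have h2 : a * (lam * C) + b * (lam * C) = lam * C := by
      rw [← add_mul, hab, one_mul]
    simp only [smul_eq_mul, hLx, hLy, hLm, hlin]
    nlinarith [h1, h2]
  · -- unique maximizer
    intro d hd hdsum hne
    set e : ι → ℝ := fun n => lam * Vol n / (α - V n) with he
    have hesum : ∑ n, e n = 1 := hsum
    have hepos : ∀ n, 0 < e n := hds
    have hcs : ∀ n, α - V n = lam * Vol n / e n := by
      intro n
      rw [he]
      exact (div_div_cancel₀ (mul_pos hlam (hVol n)).ne').symm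
    -- per-coordinate tangent inequality, summed
    have hsumlt : ∑ n, (lam * Vol n * Real.log (d n) - (α - V n) * d n)
        < ∑ n, (lam * Vol n * Real.log (e n) - (α - V n) * e n) := by
      obtain ⟨n0, hn0⟩ := Function.ne_iff.mp hne
      apply Finset.sum_lt_sum
      · intro n _
        rw [hcs n]
        exact key_le _ _ _ (mul_pos hlam (hVol n)) (hepos n) (hd n)
      · refine ⟨n0, Finset.mem_univ n0, ?_⟩
        rw [hcs n0]
        exact key_lt _ _ _ (mul_pos hlam (hVol n0)) (hepos n0) (hd n0) hn0
    have expand : ∀ f : ι → ℝ, ∑ n, (lam * Vol n * Real.log (f n) - (α - V n) * f n)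
        = lam * ∑ n, Vol n * Real.log (f n) + ∑ n, V n * f n - α * ∑ n, f n := by
      intro f
      rw [Finset.mul_sum, Finset.mul_sum, ← Finset.sum_add_distrib, ← Finset.sum_sub_distrib]
      exact Finset.sum_congr rfl (fun n _ => by ring)
    rw [expand d, expand e, hdsum, hesum] at hsumlt
    rw [hLd d hd, hLd e hepos]
    linarith
end

section
/- For every integer i ≥ 1, P(Gamma(i,1) ≤ i) ≥ 1/2, i.e., ∫_0^i s^{i−1} e^{−s} ds / (i−1)! ≥ 1/2, equivalently Γ(i, i)/Γ(i) ≤ 1/2 (the median of a Gamma(i,1) random variable is at most i). -/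
open Finset

/-- factorial inequality: `(i+j)! ≤ i^(2j+1) * (i-1-j)!` stated with `i = d+j+1`. -/
lemma stmt17_fact_aux (j : ℕ) : ∀ d : ℕ,
    (d + j + 1 + j).factorial ≤ (d + j + 1) ^ (2 * j + 1) * d.factorial := by
  induction j with
  | zero =>
      intro d
      simpa [Nat.factorial_succ] using le_refl ((d+1) * d.factorial)
  | succ j ih =>
      intro d
      have h1 := ih (d + 1)
      have e1 : d + 1 + j + 1 + j = d + 2*j + 2 := by ring
      have e2 : d + (j+1) + 1 + (j+1) = (d + 2*j + 2) + 1 := by ring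
      have e3 : d + 1 + j + 1 = d + (j+1) + 1 := by ring
      rw [e1, e3] at h1
      rw [e2, Nat.factorial_succ]
      calc (d + 2*j + 2 + 1) * (d + 2*j + 2).factorial
          ≤ (d + 2*j + 3) * ((d + (j+1) + 1) ^ (2*j+1) * (d+1).factorial) := by
            apply Nat.mul_le_mul_left
            simpa using h1
        _ = ((d + 2*j + 3) * (d + 1)) * ((d + (j+1) + 1) ^ (2*j+1) * d.factorial) := by
            rw [Nat.factorial_succ]; ring
        _ ≤ ((d + (j+1) + 1) * (d + (j+1) + 1)) * ((d + (j+1) + 1) ^ (2*j+1) * d.factorial) := by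
            apply Nat.mul_le_mul_right
            nlinarith
        _ = (d + (j+1) + 1) ^ (2*(j+1)+1) * d.factorial := by ring

/-- derivative of the partial exponential sum times `exp (-x)`. -/
lemma stmt17_deriv_aux (m : ℕ) (x : ℝ) :
    HasDerivAt (fun x : ℝ => Real.exp (-x) * ∑ k ∈ Finset.range (m+1), x ^ k / (k.factorial : ℝ))
      (-(x ^ m * Real.exp (-x) / (m.factorial : ℝ))) x := by
  have hexp : HasDerivAt (fun x : ℝ => Real.exp (-x)) (-Real.exp (-x)) x := by
    simpa using (hasDerivAt_neg x).exp
  induction m with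
  | zero =>
      simpa using hexp
  | succ m ih =>
      have h2 : HasDerivAt (fun x : ℝ => x ^ (m+1)) ((m+1 : ℕ) * x ^ m) x := by
        simpa using hasDerivAt_pow (m+1) x
      have h3 := hexp.mul (h2.div_const ((m+1).factorial : ℝ))
      have h4 := ih.add h3
      have heq : (fun x : ℝ => Real.exp (-x) * ∑ k ∈ Finset.range (m+1+1), x ^ k / (k.factorial : ℝ))
          = fun x : ℝ => (Real.exp (-x) * ∑ k ∈ Finset.range (m+1), x ^ k / (k.factorial : ℝ))
              + Real.exp (-x) * (x ^ (m+1) / ((m+1).factorial : ℝ)) := by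
        funext y; rw [Finset.sum_range_succ, mul_add]
      rw [heq]
      refine h4.congr_deriv ?_
      have hf : ((m+1).factorial : ℝ) = (m+1) * (m.factorial : ℝ) := by
        push_cast [Nat.factorial_succ]; ring
      have hm : (m.factorial : ℝ) ≠ 0 := Nat.cast_ne_zero.mpr m.factorial_ne_zero
      rw [hf]
      field_simp
      push_cast
      ring

/-- key inequality: `2 * ∑_{k<i} i^k/k! ≤ exp i`. -/
lemma stmt17_sum_aux (i : ℕ) (hi : 1 ≤ i) :
    2 * ∑ k ∈ Finset.range i, (i : ℝ) ^ k / (k.factorial : ℝ) ≤ Real.exp i := by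
  set f : ℕ → ℝ := fun k => (i : ℝ) ^ k / (k.factorial : ℝ) with hf
  have hrefl : ∑ k ∈ Finset.range i, f k = ∑ j ∈ Finset.range i, f (i - 1 - j) :=
    (Finset.sum_range_reflect f i).symm
  have hpair : ∀ j ∈ Finset.range i, f (i - 1 - j) ≤ f (i + j) := by
    intro j hj
    rw [Finset.mem_range] at hj
    -- write i = d + j + 1
    obtain ⟨d, rfl⟩ : ∃ d, i = d + j + 1 := ⟨i - j - 1, by omega⟩
    have hnat := stmt17_fact_aux j d
    have hsub : d + j + 1 - 1 - j = d := by omega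
    rw [hf, hsub]
    set I : ℝ := ((d + j + 1 : ℕ) : ℝ) with hI
    have hIpos : (0:ℝ) < I := by positivity
    have hd : (0:ℝ) < (d.factorial : ℝ) := by positivity
    have hdj : (0:ℝ) < (((d + j + 1 + j).factorial : ℕ) : ℝ) := by positivity
    rw [div_le_div_iff₀ hd hdj]
    have hcast : (((d + j + 1 + j).factorial : ℕ) : ℝ) ≤ I ^ (2*j+1) * (d.factorial : ℝ) := by
      rw [hI]
      push_cast
      exact_mod_cast hnat
    calc I ^ d * (((d + j + 1 + j).factorial : ℕ) : ℝ)
        ≤ I ^ d * (I ^ (2*j+1) * (d.factorial : ℝ)) := by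
          apply mul_le_mul_of_nonneg_left hcast (by positivity)
      _ = I ^ (d + j + 1 + j) * (d.factorial : ℝ) := by
          rw [← mul_assoc, ← pow_add]
          congr 2
          omega
  have h1 : ∑ k ∈ Finset.range i, f k ≤ ∑ j ∈ Finset.range i, f (i + j) := by
    rw [hrefl]; exact Finset.sum_le_sum hpair
  have h2 : ∑ k ∈ Finset.range (i + i), f k
      = ∑ k ∈ Finset.range i, f k + ∑ j ∈ Finset.range i, f (i + j) :=
    Finset.sum_range_add f i i
  have h3 : ∑ k ∈ Finset.range (i + i), f k ≤ Real.exp i :=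
    Real.sum_le_exp_of_nonneg (by positivity) (i + i)
  linarith

/-- the median of a `Gamma(i,1)` random variable is at most its mean `i`:
`P(Gamma(i,1) ≤ i) = (∫₀ⁱ s^{i-1} e^{-s} ds)/(i-1)! ≥ 1/2` for every integer `i ≥ 1`. -/
theorem stmt17 (i : ℕ) (hi : 1 ≤ i) :
    (1 / 2 : ℝ)
      ≤ (∫ s in (0:ℝ)..(i:ℝ), s ^ (i - 1) * Real.exp (-s)) / ((i - 1).factorial : ℝ) := by
  obtain ⟨m, rfl⟩ : ∃ m, i = m + 1 := ⟨i - 1, by omega⟩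
  have hsub : m + 1 - 1 = m := rfl
  rw [hsub]
  have hm : (0:ℝ) < (m.factorial : ℝ) := by positivity
  -- compute the integral via FTC
  set F : ℝ → ℝ := fun x => -((m.factorial : ℝ) *
      (Real.exp (-x) * ∑ k ∈ Finset.range (m+1), x ^ k / (k.factorial : ℝ))) with hF
  have hderiv : ∀ x ∈ Set.uIcc (0:ℝ) ((m+1 : ℕ) : ℝ),
      HasDerivAt F (x ^ m * Real.exp (-x)) x := by
    intro x _
    have h := ((stmt17_deriv_aux m x).const_mul ((m.factorial : ℝ))).neg
    refine h.congr_deriv ?_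
    field_simp
  have hcont : IntervalIntegrable (fun s : ℝ => s ^ m * Real.exp (-s))
      MeasureTheory.volume 0 ((m+1 : ℕ) : ℝ) :=
    (Continuous.mul (continuous_pow m) (Real.continuous_exp.comp continuous_neg)).intervalIntegrable _ _
  have hint := intervalIntegral.integral_eq_sub_of_hasDerivAt hderiv hcont
  rw [hint]
  have hF0 : F 0 = -(m.factorial : ℝ) := by
    have hsum : ∑ k ∈ Finset.range (m+1), (0:ℝ) ^ k / (k.factorial : ℝ) = 1 := by
      rw [Finset.sum_eq_single 0]
      · simp
      · intro k _ hk
        rw [zero_pow hk, zero_div]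
      · simp
    simp [hF, hsum]
  rw [hF0, hF]
  set S : ℝ := ∑ k ∈ Finset.range (m+1), ((m+1 : ℕ) : ℝ) ^ k / (k.factorial : ℝ) with hS
  have hkey : 2 * S ≤ Real.exp ((m+1 : ℕ) : ℝ) := stmt17_sum_aux (m+1) (by omega)
  have hepos : (0:ℝ) < Real.exp ((m+1 : ℕ) : ℝ) := Real.exp_pos _
  have hSnn : 0 ≤ S := by
    apply Finset.sum_nonneg; intro k _; positivity
  have hhalf : Real.exp (-((m+1 : ℕ) : ℝ)) * S ≤ 1 / 2 := by
    rw [Real.exp_neg]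
    rw [inv_mul_le_iff₀ hepos] at *
    nlinarith
  have hval : (-((m.factorial : ℝ) * (Real.exp (-((m+1 : ℕ) : ℝ)) * S)) - -(m.factorial : ℝ))
      / (m.factorial : ℝ) = 1 - Real.exp (-((m+1 : ℕ) : ℝ)) * S := by
    field_simp
    ring
  rw [hval]
  linarith
end
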